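/- Evaluate: (3/28)·[∫_1^{3/2} 4(u-1)(6-4u) du + ∫_0^1 ∫_0^{(3-u)/3} 2(1+u-v)(3-u-3v) dv du + ∫_1^{3/2} ∫_0^{(6-4u)/3} 2(2-v)(6-4u-3v) dv du] = 19/56, and in particular 19/56 < 1. -/

import Mathlib

open intervalIntegral

lemma poly_int (a b c d x y : ℝ) :
    (∫ t in x..y, (a + b*t + c*t^2 + d*t^3)) =
      (a*y + b*y^2/2 + c*y^3/3 + d*y^4/4) - (a*x + b*x^2/2 + c*x^3/3 + d*x^4/4) := by
  apply intervalIntegral.integral_eq_sub_of_hasDerivAt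
  · intro t _
    have h1 := (hasDerivAt_id t).const_mul a
    have h2 := ((hasDerivAt_pow 2 t).const_mul b).div_const 2
    have h3 := ((hasDerivAt_pow 3 t).const_mul c).div_const 3
    have h4 := ((hasDerivAt_pow 4 t).const_mul d).div_const 4
    have := ((h1.add h2).add h3).add h4
    convert this using 1
    · funext s; simp only [Pi.add_apply, id]
    · push_cast
      ring
  · apply Continuous.intervalIntegrable
    continuity

/-- `S(W_{•,•}^{E_L}; R|_{E_L}) = 19/56 < 1`. -/
theorem S_value_EL_R_restriction :
    (3 / 28 : ℝ) *
      ((∫ u in (1:ℝ)..(3/2), 4 * (u - 1) * (6 - 4 * u)) +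
       (∫ u in (0:ℝ)..1, ∫ v in (0:ℝ)..((3 - u) / 3),
          2 * (1 + u - v) * (3 - u - 3 * v)) +
       (∫ u in (1:ℝ)..(3/2), ∫ v in (0:ℝ)..((6 - 4 * u) / 3),
          2 * (2 - v) * (6 - 4 * u - 3 * v))) =
      19 / 56 ∧ (19 / 56 : ℝ) < 1 := by
  have h1 : (∫ u in (1:ℝ)..(3/2), 4 * (u - 1) * (6 - 4 * u)) = 1/3 := by
    have e : (fun u : ℝ => 4 * (u - 1) * (6 - 4 * u)) =
        fun u : ℝ => (-24) + 40*u + (-16)*u^2 + 0*u^3 := by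
      funext u; ring
    rw [e, poly_int]; norm_num
  have h2 : (∫ u in (0:ℝ)..1, ∫ v in (0:ℝ)..((3 - u) / 3),
      2 * (1 + u - v) * (3 - u - 3 * v)) = 131/54 := by
    have e : (fun u : ℝ => ∫ v in (0:ℝ)..((3 - u) / 3),
        2 * (1 + u - v) * (3 - u - 3 * v)) =
        fun u : ℝ => 2 + 2*u + (-2)*u^2 + (10/27)*u^3 := by
      funext u
      have e2 : (fun v : ℝ => 2 * (1 + u - v) * (3 - u - 3 * v)) =
          fun v : ℝ => (6 + 4*u - 2*u^2) + (-(12 + 4*u))*v + 6*v^2 + 0*v^3 := by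
        funext v; ring
      rw [e2, poly_int]; ring
    rw [e, poly_int]; norm_num
  have h3 : (∫ u in (1:ℝ)..(3/2), ∫ v in (0:ℝ)..((6 - 4 * u) / 3),
      2 * (2 - v) * (6 - 4 * u - 3 * v)) = 11/27 := by
    have e : (fun u : ℝ => ∫ v in (0:ℝ)..((6 - 4 * u) / 3),
        2 * (2 - v) * (6 - 4 * u - 3 * v)) =
        fun u : ℝ => 16 + (-16)*u + 0*u^2 + (64/27)*u^3 := by
      funext u
      have e2 : (fun v : ℝ => 2 * (2 - v) * (6 - 4 * u - 3 * v)) =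
          fun v : ℝ => (24 - 16*u) + (-(24 - 8*u))*v + 6*v^2 + 0*v^3 := by
        funext v; ring
      rw [e2, poly_int]; ring
    rw [e, poly_int]; norm_num
  rw [h1, h2, h3]
  norm_num
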